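/- Let H be a real Hilbert space, x̂ ∈ H with ‖x̂‖ = 1, and set x_n = (1 − 1/n) x̂ for n ≥ 1. Then for every y in the open unit ball of H, d_h((1,x_n),(1,y)) − d_h((1,x_n),(1,0)) converges to the Busemann function ξ((1,y)) = log((1 − ⟨x̂,y⟩)/√(1 − ‖y‖²)). -/

import Mathlib

open Filter Topology RealInnerProductSpace

noncomputable def dh {H : Type*} [NormedAddCommGroup H] [InnerProductSpace ℝ H]
    (x y : H) : ℝ :=
  Real.log ((1 - ⟪x, y⟫ + Real.sqrt ((1 - ⟪x, y⟫) ^ 2 - (1 - ‖x‖ ^ 2) * (1 - ‖y‖ ^ 2))) /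
    (Real.sqrt (1 - ‖x‖ ^ 2) * Real.sqrt (1 - ‖y‖ ^ 2)))

/-!
Writing `dh x y - dh x 0` as the logarithm of a single quotient cancels the factor
`√(1 - ‖x‖²)`, which is what blows up as `x` approaches the unit sphere. The remaining quotient
`dhRatio y x` is continuous in `x` on the whole space, and at a unit vector `x̂` the square root in
its numerator collapses to `1 - ⟪x̂, y⟫`, so that it equals `(1 - ⟪x̂, y⟫) / √(1 - ‖y‖²)`.
-/

namespace Hyperbolic

theorem sqrt_one_sub_norm_sq_pos {E : Type*} [SeminormedAddGroup E] {x : E} (hx : ‖x‖ < 1) :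
    0 < Real.sqrt (1 - ‖x‖ ^ 2) :=
  Real.sqrt_pos.2 (by nlinarith [norm_nonneg x])

section NormedSpace

variable {E : Type*} [NormedAddCommGroup E] [NormedSpace ℝ E]

theorem tendsto_one_sub_one_div_smul (v : E) :
    Tendsto (fun n : ℕ => (1 - 1 / (n : ℝ)) • v) atTop (𝓝 v) := by
  have h : Tendsto (fun n : ℕ => 1 - 1 / (n : ℝ)) atTop (𝓝 (1 - 0)) :=
    tendsto_const_nhds.sub tendsto_one_div_atTop_nhds_zero_nat
  simpa using h.smul_const v

theorem norm_one_sub_one_div_smul_lt_one {v : E} (hv : ‖v‖ = 1) {n : ℕ} (hn : 1 ≤ n) :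
    ‖(1 - 1 / (n : ℝ)) • v‖ < 1 := by
  have hn' : (1 : ℝ) ≤ n := by exact_mod_cast hn
  have h0 : 0 < 1 / (n : ℝ) := by positivity
  have h1 : 1 / (n : ℝ) ≤ 1 := by rw [div_le_one (by positivity)]; exact hn'
  rw [norm_smul, hv, mul_one, Real.norm_eq_abs, abs_lt]
  constructor <;> linarith

end NormedSpace

variable {H : Type*} [NormedAddCommGroup H] [InnerProductSpace ℝ H]

noncomputable def dhRatio (y x : H) : ℝ :=
  (1 - ⟪x, y⟫ + Real.sqrt ((1 - ⟪x, y⟫) ^ 2 - (1 - ‖x‖ ^ 2) * (1 - ‖y‖ ^ 2))) /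
    ((1 + ‖x‖) * Real.sqrt (1 - ‖y‖ ^ 2))

theorem dh_zero_right (x : H) :
    dh x 0 = Real.log ((1 + ‖x‖) / Real.sqrt (1 - ‖x‖ ^ 2)) := by
  have hsq : (1 - ⟪x, (0 : H)⟫) ^ 2 - (1 - ‖x‖ ^ 2) * (1 - ‖(0 : H)‖ ^ 2) = ‖x‖ ^ 2 := by
    simp
  rw [dh, hsq, Real.sqrt_sq (norm_nonneg x)]
  simp

theorem inner_lt_one_of_norm_le_one {x y : H} (hx : ‖x‖ ≤ 1) (hy : ‖y‖ < 1) : ⟪x, y⟫ < 1 :=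
  calc ⟪x, y⟫ ≤ ‖x‖ * ‖y‖ := real_inner_le_norm x y
    _ < 1 := by nlinarith [norm_nonneg x, norm_nonneg y]

theorem dh_sub_dh_zero {x y : H} (hx : ‖x‖ < 1) (hy : ‖y‖ < 1) :
    dh x y - dh x 0 = Real.log (dhRatio y x) := by
  have hnum : 0 < 1 - ⟪x, y⟫ + Real.sqrt ((1 - ⟪x, y⟫) ^ 2 - (1 - ‖x‖ ^ 2) * (1 - ‖y‖ ^ 2)) := by
    have := inner_lt_one_of_norm_le_one hx.le hy
    positivity
  have hsx := sqrt_one_sub_norm_sq_pos hx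
  have hsy := sqrt_one_sub_norm_sq_pos hy
  have hx1 : 0 < 1 + ‖x‖ := by positivity
  rw [dh_zero_right, dh, ← Real.log_div (by positivity) (by positivity), dhRatio]
  congr 1
  field_simp

theorem continuous_dhRatio {y : H} (hy : ‖y‖ < 1) : Continuous (dhRatio y) := by
  have hsy := sqrt_one_sub_norm_sq_pos hy
  refine Continuous.div (by fun_prop) (by fun_prop) fun x => ?_
  positivity

theorem dhRatio_of_norm_eq_one {x : H} (y : H) (hx : ‖x‖ = 1) (hxy : ⟪x, y⟫ ≤ 1) :
    dhRatio y x = (1 - ⟪x, y⟫) / Real.sqrt (1 - ‖y‖ ^ 2) := by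
  have hsq : (1 - ⟪x, y⟫) ^ 2 - (1 - ‖x‖ ^ 2) * (1 - ‖y‖ ^ 2) = (1 - ⟪x, y⟫) ^ 2 := by
    rw [hx]; ring
  rw [dhRatio, hsq, Real.sqrt_sq (sub_nonneg.2 hxy), hx]
  field_simp

end Hyperbolic

open Hyperbolic in
theorem stmt_13_general {H : Type*} [NormedAddCommGroup H] [InnerProductSpace ℝ H]
    (xhat : H) (hxhat : ‖xhat‖ = 1) (y : H) (hy : ‖y‖ < 1) :
    Tendsto (fun n : ℕ => dh ((1 - 1 / (n : ℝ)) • xhat) y - dh ((1 - 1 / (n : ℝ)) • xhat) (0 : H))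
      atTop (𝓝 (Real.log ((1 - ⟪xhat, y⟫) / Real.sqrt (1 - ‖y‖ ^ 2)))) := by
  have hxy : ⟪xhat, y⟫ < 1 := inner_lt_one_of_norm_le_one hxhat.le hy
  have hlimit : 0 < dhRatio y xhat := by
    rw [dhRatio_of_norm_eq_one y hxhat hxy.le]
    exact div_pos (by linarith) (sqrt_one_sub_norm_sq_pos hy)
  have hratio := ((continuous_dhRatio hy).tendsto xhat).comp (tendsto_one_sub_one_div_smul xhat)
  rw [← dhRatio_of_norm_eq_one y hxhat hxy.le]
  refine (hratio.log hlimit.ne').congr' ?_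
  filter_upwards [eventually_ge_atTop 1] with n hn
  exact (dh_sub_dh_zero (norm_one_sub_one_div_smul_lt_one hxhat hn) hy).symm

theorem stmt_13 {H : Type*} [NormedAddCommGroup H] [InnerProductSpace ℝ H] [CompleteSpace H]
    (xhat : H) (hxhat : ‖xhat‖ = 1) (y : H) (hy : ‖y‖ < 1) :
    Tendsto (fun n : ℕ => dh ((1 - 1 / (n : ℝ)) • xhat) y - dh ((1 - 1 / (n : ℝ)) • xhat) (0 : H))
      atTop (𝓝 (Real.log ((1 - ⟪xhat, y⟫) / Real.sqrt (1 - ‖y‖ ^ 2)))) :=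
  stmt_13_general xhat hxhat y hy
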